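/- Let x be a solution of (E) and let M ≥ τ be such that x(t) ≥ 0 for all t ≥ M. Then for every index k with t_k ≥ M and every t ≥ t_k, x(t) ≤ x(t_k) + r(t_k)·x′(t_k)·∫_{t_k}^{t} ds/r(s). In particular, if additionally ∫_τ^∞ ds/r(s) = ∞ and x′(t_k) < 0, then x(t) → −∞ as t → ∞, a contradiction with x ≥ 0. -/

import Mathlib

/-! On each `[t_k, t_{k+1}]` the quasi-derivative `r x'` has derivative `-f(t, x(ζ_k))`, which is
`≤ 0` as soon as `x(ζ_k) ≥ 0`; with `x'` continuous at the grid points, `r x'` is therefore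
nonincreasing on `[t_k, ∞)`. Hence `x' ≤ r(t_k) x'(t_k) / r` there, and integrating gives the
bound. If `x'(t_k) < 0`, the divergence of `∫ 1/r` drives that bound below zero. -/

open MeasureTheory Set Filter

theorem nonneg_apply_of_forall_mul_apply_pos {g : ℝ → ℝ} (hg : ContinuousAt g 0)
    (hpos : ∀ y, y ≠ 0 → 0 < y * g y) {y : ℝ} (hy : 0 ≤ y) : 0 ≤ g y := by
  rcases hy.eq_or_lt with rfl | hy
  · refine ge_of_tendsto (hg.tendsto.mono_left (nhdsWithin_le_nhds (s := Ioi 0))) ?_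
    filter_upwards [self_mem_nhdsWithin] with z (hz : 0 < z)
    exact (pos_of_mul_pos_right (hpos z hz.ne') hz.le).le
  · exact (pos_of_mul_pos_right (hpos y hy.ne') hy.le).le

theorem antitoneOn_Icc_of_hasDerivAt_nonpos {g g' : ℝ → ℝ} {a b : ℝ}
    (hg : ContinuousOn g (Icc a b)) (hderiv : ∀ s ∈ Ioo a b, HasDerivAt g (g' s) s)
    (hnonpos : ∀ s ∈ Ioo a b, g' s ≤ 0) : AntitoneOn g (Icc a b) := by
  refine antitoneOn_of_hasDerivWithinAt_nonpos (f' := g') (convex_Icc a b) hg ?_ ?_ <;>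
    rw [interior_Icc]
  · exact fun s hs => (hderiv s hs).hasDerivWithinAt
  · exact hnonpos

theorem antitoneOn_Ici_of_antitoneOn_Icc_succ {g : ℝ → ℝ} {t : ℕ → ℝ} (ht : Monotone t)
    (htop : Tendsto t atTop atTop) (k : ℕ)
    (hg : ∀ j, k ≤ j → AntitoneOn g (Icc (t j) (t (j + 1)))) : AntitoneOn g (Ici (t k)) := by
  have hIcc : ∀ n, AntitoneOn g (Icc (t k) (t (k + n))) := by
    intro n
    induction n with
    | zero => simp
    | succ n ih =>
      have h₁ : t k ≤ t (k + n) := ht (k.le_add_right n)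
      have h₂ : t (k + n) ≤ t (k + n + 1) := ht (k + n).le_succ
      have h := ih.union_right (hg _ (k.le_add_right n)) (isGreatest_Icc h₁) (isLeast_Icc h₂)
      rwa [Icc_union_Icc_eq_Icc h₁ h₂] at h
  intro a ha b hb hab
  obtain ⟨N, hN⟩ := eventually_atTop.mp (htop.eventually_ge_atTop b)
  have hbN : b ≤ t (k + N) := hN _ (N.le_add_left k)
  exact hIcc N ⟨ha, hab.trans hbN⟩ ⟨hb, hbN⟩ hab

theorem le_add_mul_integral_one_div_of_mul_deriv_le {x x' r : ℝ → ℝ} {a b C : ℝ} (hab : a ≤ b)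
    (hx : ∀ s ∈ Icc a b, HasDerivAt x (x' s) s) (hx' : ContinuousOn x' (Icc a b))
    (hr : ContinuousOn r (Icc a b)) (hr_pos : ∀ s ∈ Icc a b, 0 < r s)
    (hC : ∀ s ∈ Icc a b, r s * x' s ≤ C) :
    x b ≤ x a + C * ∫ s in a..b, 1 / r s := by
  have hx'_int : IntervalIntegrable x' volume a b := hx'.intervalIntegrable_of_Icc hab
  have hr_int : IntervalIntegrable (fun s => C * (1 / r s)) volume a b :=
    (continuousOn_const.mul (continuousOn_const.div hr fun s hs => (hr_pos s hs).ne'))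
      |>.intervalIntegrable_of_Icc hab
  have hmono : ∫ s in a..b, x' s ≤ ∫ s in a..b, C * (1 / r s) :=
    intervalIntegral.integral_mono_on hab hx'_int hr_int fun s hs => by
      rw [mul_one_div, le_div_iff₀ (hr_pos s hs), mul_comm]
      exact hC s hs
  rw [intervalIntegral.integral_eq_sub_of_hasDerivAt
      (fun s hs => hx s (by rwa [uIcc_of_le hab] at hs)) hx'_int,
    intervalIntegral.integral_const_mul] at hmono
  linarith

theorem exists_lt_intervalIntegral_of_lintegral_Ioi_eq_top {g : ℝ → ℝ} {a b : ℝ} (hab : a ≤ b)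
    (hg : ContinuousOn g (Ici a)) (hg_nonneg : ∀ s ∈ Ici a, 0 ≤ g s)
    (htop : ∫⁻ s in Ioi a, ENNReal.ofReal (g s) = ⊤) (I : ℝ) :
    ∃ s, b ≤ s ∧ I < ∫ u in b..s, g u := by
  by_contra! hbdd
  have hint_Ioc : ∀ c d, a ≤ c → IntegrableOn g (Ioc c d) := fun c d hc =>
    ((hg.mono fun u hu => hc.trans hu.1).integrableOn_Icc).mono_set Ioc_subset_Icc_self
  have hint_Ioi : IntegrableOn g (Ioi b) := by
    refine integrableOn_Ioi_of_intervalIntegral_norm_bounded (l := atTop) I b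
      (fun d => hint_Ioc b d hab) tendsto_id ?_
    filter_upwards [eventually_ge_atTop b] with s hs
    rw [intervalIntegral.integral_congr fun u hu =>
      Real.norm_of_nonneg (hg_nonneg u (hab.trans (uIcc_of_le hs ▸ hu).1))]
    exact hbdd s hs
  have hint : IntegrableOn g (Ioi a) := by
    rw [← Ioc_union_Ioi_eq_Ioi hab]
    exact (hint_Ioc a b le_rfl).union hint_Ioi
  exact hint.lintegral_lt_top.ne htop

theorem stmt5
    (t ζ : ℕ → ℝ) (ht_mono : StrictMono t)
    (ht_top : Tendsto t atTop atTop)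
    (hζ : ∀ k : ℕ, ζ k ∈ Icc (t k) (t (k+1)))
    (r : ℝ → ℝ) (hr_cont : ContinuousOn r (Ici (t 0)))
    (hr_pos : ∀ s ∈ Ici (t 0), 0 < r s)
    (f : ℝ → ℝ → ℝ)
    (hf_cont : ContinuousOn (fun q : ℝ × ℝ => f q.1 q.2) ((Ici (t 0)) ×ˢ (univ : Set ℝ)))
    (hf_sign : ∀ s ∈ Ici (t 0), ∀ y : ℝ, y ≠ 0 → 0 < y * f s y)
    (x x' : ℝ → ℝ)
    (hx_deriv : ∀ s ∈ Ici (t 0), HasDerivAt x (x' s) s)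
    (hx'_cont : ContinuousOn x' (Ici (t 0)))
    (hE : ∀ k : ℕ, ∀ s ∈ Ioo (t k) (t (k+1)),
      HasDerivAt (fun u => r u * x' u) (-(f s (x (ζ k)))) s)
    (M : ℝ) (hM : t 0 ≤ M) (hxM : ∀ s : ℝ, M ≤ s → 0 ≤ x s) :
    (∀ k : ℕ, M ≤ t k → ∀ s : ℝ, t k ≤ s →
      x s ≤ x (t k) + r (t k) * x' (t k) * ∫ u in t k..s, 1 / r u) ∧
    ((∫⁻ s in Ioi (t 0), ENNReal.ofReal (1 / r s) = ⊤) →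
      ∀ k : ℕ, M ≤ t k → ¬ x' (t k) < 0) := by
  have hf_nonneg : ∀ s ∈ Ici (t 0), ∀ y, 0 ≤ y → 0 ≤ f s y := fun s hs _ =>
    nonneg_apply_of_forall_mul_apply_pos (hf_cont.comp_continuous
      (continuous_const.prodMk continuous_id) fun y => ⟨hs, mem_univ y⟩).continuousAt (hf_sign s hs)
  have hrx'_anti : ∀ k, M ≤ t k → AntitoneOn (fun u => r u * x' u) (Ici (t k)) := by
    refine fun k hk =>
      antitoneOn_Ici_of_antitoneOn_Icc_succ ht_mono.monotone ht_top k fun j hj => ?_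
    have hMj : M ≤ t j := hk.trans (ht_mono.monotone hj)
    have hsub : Icc (t j) (t (j + 1)) ⊆ Ici (t 0) := fun u hu => (hM.trans hMj).trans hu.1
    refine antitoneOn_Icc_of_hasDerivAt_nonpos ((hr_cont.mono hsub).mul (hx'_cont.mono hsub))
      (hE j) fun s hs => neg_nonpos.mpr ?_
    exact hf_nonneg s (hsub (Ioo_subset_Icc_self hs)) _ (hxM _ (hMj.trans (hζ j).1))
  have hbound : ∀ k, M ≤ t k → ∀ s, t k ≤ s →
      x s ≤ x (t k) + r (t k) * x' (t k) * ∫ u in t k..s, 1 / r u := by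
    intro k hk s hs
    have hsub : Icc (t k) s ⊆ Ici (t 0) := fun u hu => (hM.trans hk).trans hu.1
    exact le_add_mul_integral_one_div_of_mul_deriv_le hs (fun u hu => hx_deriv u (hsub hu))
      (hx'_cont.mono hsub) (hr_cont.mono hsub) (fun u hu => hr_pos u (hsub hu))
      fun u hu => hrx'_anti k hk self_mem_Ici hu.1 hu.1
  refine ⟨hbound, fun hdiv k hk hneg => ?_⟩
  have hC : r (t k) * x' (t k) < 0 := mul_neg_of_pos_of_neg (hr_pos _ (hM.trans hk)) hneg
  obtain ⟨s, hs, hlt⟩ := exists_lt_intervalIntegral_of_lintegral_Ioi_eq_top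
    (g := fun u => 1 / r u) (hM.trans hk)
    (continuousOn_const.div hr_cont fun u hu => (hr_pos u hu).ne')
    (fun u hu => (one_div_pos.mpr (hr_pos u hu)).le) hdiv (x (t k) / -(r (t k) * x' (t k)))
  rw [div_lt_iff₀ (neg_pos.mpr hC)] at hlt
  linarith [hbound k hk s hs, hxM s (hk.trans hs)]
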